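/- arXiv:2305.00140 — 3 statements merged into one kernel-verified Lean document; each statement's English description precedes it below -/
import Mathlib

section
/- Let C = {x, y, z, t} be a set of four distinct alternatives in an election with voting profile V such that z ≥_{3/4} x, x ≥_{3/4} y, and x ≥_{3/4} t. Then, counting votes with multiplicity, #{v ∈ V : top_{{x,y,t}}(v) = y} + #{v ∈ V : top_{{y,z,t}}(v) = y} ≤ #{v ∈ V : top_{{x,y,t}}(v) = x} + #{v ∈ V : top_{{y,z,t}}(v) = z}. Equivalently, the total contribution of the two subsets {x,y,t} and {y,z,t} to the difference d³(z>x>y>t, V) − d³(y>z>x>t, V) is at most 0. -/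
open Finset

variable {α : Type}

/-- A ranking of the alternatives: a duplicate-free list containing every
alternative; earlier in the list means more preferred. -/
def IsRanking (l : List α) : Prop := l.Nodup ∧ ∀ a : α, a ∈ l

/-- The 3-wise Kendall tau distance between two rankings: the number of subsets
`S` with `|S| ≤ 3` on which the two rankings have different top elements. -/
def d3 [Fintype α] [DecidableEq α] (l m : List α) : ℕ :=
  ((Finset.univ : Finset α).powerset.filter
    (fun S => S.card ≤ 3 ∧ ∃ a ∈ S, ∃ b ∈ S, a ≠ b ∧
      (∀ c ∈ S, l.idxOf a ≤ l.idxOf c) ∧ (∀ c ∈ S, m.idxOf b ≤ m.idxOf c))).card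

/-- Total 3-wise Kendall tau distance from a ranking to a voting profile. -/
def d3V [Fintype α] [DecidableEq α] (l : List α) (V : Multiset (List α)) : ℕ :=
  (V.map (fun v => d3 l v)).sum

/-- A 3-wise median of the voting profile `V`. -/
def IsMedian3 [Fintype α] [DecidableEq α] (V : Multiset (List α)) (l : List α) : Prop :=
  IsRanking l ∧ ∀ m : List α, IsRanking m → d3V l V ≤ d3V m V

/-- The 2-wise Kendall tau distance between two rankings: the number of
two-element subsets on which the relative orders differ. -/
def d2 [Fintype α] [DecidableEq α] (l m : List α) : ℕ :=
  ((Finset.univ : Finset α).powerset.filter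
    (fun S => S.card = 2 ∧ ∃ a ∈ S, ∃ b ∈ S,
      l.idxOf a < l.idxOf b ∧ m.idxOf b < m.idxOf a)).card

/-- Total 2-wise Kendall tau distance from a ranking to a voting profile. -/
def d2V [Fintype α] [DecidableEq α] (l : List α) (V : Multiset (List α)) : ℕ :=
  (V.map (fun v => d2 l v)).sum

/-- A 2-wise median of the voting profile `V`. -/
def IsMedian2 [Fintype α] [DecidableEq α] (V : Multiset (List α)) (l : List α) : Prop :=
  IsRanking l ∧ ∀ m : List α, IsRanking m → d2V l V ≤ d2V m V

/-- `x ≥ₛ y`: `x` is ranked before `y` in at least `s·|V|` votes. -/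
def geq [DecidableEq α] (V : Multiset (List α)) (s : ℝ) (x y : α) : Prop :=
  s * (V.card : ℝ) ≤ (V.countP (fun v => v.idxOf x < v.idxOf y) : ℝ)

/-- `x` is a non-dirty alternative with respect to the threshold `s`. -/
def NonDirty [DecidableEq α] (V : Multiset (List α)) (s : ℝ) (x : α) : Prop :=
  ∀ y : α, y ≠ x → geq V s x y ∨ geq V s y x

/-- The election satisfies the `3/4`-majority rule with respect to the 3-wise
Kemeny voting scheme. -/
def Satisfies34 [Fintype α] [DecidableEq α] (V : Multiset (List α)) : Prop :=
  ∀ x : α, NonDirty V (3/4) x → ∀ y : α, y ≠ x →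
    (geq V (3/4) x y → ∀ π : List α, IsMedian3 V π → π.idxOf x < π.idxOf y) ∧
    (geq V (3/4) y x → ∀ π : List α, IsMedian3 V π → π.idxOf y < π.idxOf x)

/-- `n_{xy}`: the number of votes ranking `x` before `y`. -/
def nn2 [DecidableEq α] (V : Multiset (List α)) (x y : α) : ℕ :=
  V.countP (fun v => v.idxOf x < v.idxOf y)

/-- `n_{xyz}`: the number of votes ranking `x` before `y` before `z`. -/
def nn3 [DecidableEq α] (V : Multiset (List α)) (x y z : α) : ℕ :=
  V.countP (fun v => v.idxOf x < v.idxOf y ∧ v.idxOf y < v.idxOf z)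

/-- `n_{xyzt}`: the number of votes ranking `x` before `y` before `z` before `t`. -/
def nn4 [DecidableEq α] (V : Multiset (List α)) (x y z t : α) : ℕ :=
  V.countP (fun v => v.idxOf x < v.idxOf y ∧ v.idxOf y < v.idxOf z ∧
    v.idxOf z < v.idxOf t)

/-- `δ_{xy} = n_{xy} - n_{yx}`. -/
def del [DecidableEq α] (V : Multiset (List α)) (x y : α) : ℤ :=
  (nn2 V x y : ℤ) - nn2 V y x

/-- `P_{x,y,z}`. -/
def Pq [DecidableEq α] (V : Multiset (List α)) (x y z : α) : ℤ :=
  3 * (nn3 V x z y : ℤ) + nn3 V x y z + nn3 V z x y + nn3 V z y x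
    - 4 * nn3 V y z x - 2 * nn3 V y x z

/-- `Q_{x,y,z}`. -/
def Qq [DecidableEq α] (V : Multiset (List α)) (x y z : α) : ℤ :=
  (nn3 V x y z : ℤ) + nn3 V x z y - nn3 V y x z - nn3 V y z x

/-- `R_{y,x,z,t}`. -/
def Rr [DecidableEq α] (V : Multiset (List α)) (y x z t : α) : ℤ :=
  2 * (nn4 V y z t x : ℤ) + 2 * nn4 V y z x t + nn4 V y t z x + nn4 V y t x z

/-- `S_{y,x,z,t} = R_{y,x,z,t} - R_{x,y,z,t}`. -/
def Ss [DecidableEq α] (V : Multiset (List α)) (y x z t : α) : ℤ :=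
  Rr V y x z t - Rr V x y z t

/-!
Everything is a union bound over the votes. Write `n = |V|` and `n_ab` for the number of votes
ranking `a` before `b`. The left-hand side is at most `(n - n_xy) + (n - n_zy)`, and
`n_zy ≥ n_zx + n_xy - n`. The first count on the right is at least `n_xy + n_xt - n`, and since
`z > x` and `x` on top of `{x, y, t}` put `z` on top of `{y, z, t}`, the second is at least
`n_zx` plus the first, minus `n`. So the right-hand side minus the left-hand side is at least
`4 n_xy + 2 n_xt + 2 n_zx - 6 n`, which is nonnegative because each `n_ab` here is `≥ 3n/4`.
-/

namespace Multiset

variable {β : Type*} (s : Multiset β) {p q r : β → Prop}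
  [DecidablePred p] [DecidablePred q] [DecidablePred r]

theorem countP_le_countP_of_imp (h : ∀ a, p a → q a) : s.countP p ≤ s.countP q := by
  simpa only [countP_eq_card_filter] using card_le_card (monotone_filter_right s h)

theorem countP_add_countP_le_card (h : ∀ a, p a → ¬q a) :
    s.countP p + s.countP q ≤ card s := by
  rw [card_eq_countP_add_countP p s]
  exact Nat.add_le_add_left
    (s.countP_le_countP_of_imp (q := fun a => ¬p a) fun a hq hp => h a hp hq) _

theorem countP_add_countP_le_card_add_countP (h : ∀ a, p a → q a → r a) :
    s.countP p + s.countP q ≤ card s + s.countP r := by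
  have hsplit := congrArg card (filter_add_filter p q s)
  simp only [card_add, ← countP_eq_card_filter] at hsplit
  rw [hsplit]
  exact Nat.add_le_add (countP_le_card _ _) (s.countP_le_countP_of_imp fun a ha => h a ha.1 ha.2)

end Multiset

theorem three_mul_card_le_of_geq [DecidableEq α] {V : Multiset (List α)} {x y : α}
    (h : geq V (3/4) x y) : 3 * V.card ≤ 4 * nn2 V x y := by
  have h' : (3 : ℝ) * V.card ≤ 4 * nn2 V x y := by
    unfold geq at h
    unfold nn2
    linarith
  exact_mod_cast h'

theorem stmt4_general [DecidableEq α]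
    (V : Multiset (List α))
    (x y z t : α)
    (hzx : geq V (3/4) z x) (hxy34 : geq V (3/4) x y) (hxt34 : geq V (3/4) x t) :
    V.countP (fun v => v.idxOf y < v.idxOf x ∧ v.idxOf y < v.idxOf t)
      + V.countP (fun v => v.idxOf y < v.idxOf z ∧ v.idxOf y < v.idxOf t)
    ≤ V.countP (fun v => v.idxOf x < v.idxOf y ∧ v.idxOf x < v.idxOf t)
      + V.countP (fun v => v.idxOf z < v.idxOf y ∧ v.idxOf z < v.idxOf t) := by
  have hnzx := three_mul_card_le_of_geq hzx
  have hnxy := three_mul_card_le_of_geq hxy34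
  have hnxt := three_mul_card_le_of_geq hxt34
  have hy_xt : V.countP (fun v => v.idxOf y < v.idxOf x ∧ v.idxOf y < v.idxOf t) + nn2 V x y
      ≤ V.card := V.countP_add_countP_le_card fun _ h h' => by omega
  have hy_zt : V.countP (fun v => v.idxOf y < v.idxOf z ∧ v.idxOf y < v.idxOf t) + nn2 V z y
      ≤ V.card := V.countP_add_countP_le_card fun _ h h' => by omega
  have hzy : nn2 V z x + nn2 V x y ≤ V.card + nn2 V z y :=
    V.countP_add_countP_le_card_add_countP fun _ h h' => by omega
  have hx_yt : nn2 V x y + nn2 V x t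
      ≤ V.card + V.countP (fun v => v.idxOf x < v.idxOf y ∧ v.idxOf x < v.idxOf t) :=
    V.countP_add_countP_le_card_add_countP fun _ h h' => ⟨h, h'⟩
  have hz_yt : nn2 V z x + V.countP (fun v => v.idxOf x < v.idxOf y ∧ v.idxOf x < v.idxOf t)
      ≤ V.card + V.countP (fun v => v.idxOf z < v.idxOf y ∧ v.idxOf z < v.idxOf t) :=
    V.countP_add_countP_le_card_add_countP fun _ h h' => by omega
  omega

theorem stmt4 [DecidableEq α]
    (V : Multiset (List α)) (hV : ∀ v ∈ V, IsRanking v)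
    (x y z t : α) (hxy : x ≠ y) (hxz : x ≠ z) (hxt : x ≠ t)
    (hyz : y ≠ z) (hyt : y ≠ t) (hzt : z ≠ t)
    (hzx : geq V (3/4) z x) (hxy34 : geq V (3/4) x y) (hxt34 : geq V (3/4) x t) :
    V.countP (fun v => v.idxOf y < v.idxOf x ∧ v.idxOf y < v.idxOf t)
      + V.countP (fun v => v.idxOf y < v.idxOf z ∧ v.idxOf y < v.idxOf t)
    ≤ V.countP (fun v => v.idxOf x < v.idxOf y ∧ v.idxOf x < v.idxOf t)
      + V.countP (fun v => v.idxOf z < v.idxOf y ∧ v.idxOf z < v.idxOf t) :=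
  stmt4_general V x y z t hzx hxy34 hxt34
end

section
/- Let V be an election over a finite set C of alternatives, let x, y ∈ C be distinct, and let L, Z, R be pairwise disjoint linearly ordered subsets of C with C = L ∪ {y} ∪ Z ∪ {x} ∪ R. Consider the rankings π: L > y > Z > x > R, σ₁*: L > Z > x > y > R, and σ₂*: L > x > y > Z > R, and set Δᵢ = d³(π, V) − d³(σᵢ*, V) for i ∈ {1,2}. Then Δ₁ + Δ₂ = 2·Σ_{t ∈ R} Q_{x,y,t} + 2δ_{xy} + Σ_{z ∈ Z} P_{x,y,z} − Σ S_{y,x,z,t}, where the last sum ranges over all pairs (z,t) with z ∈ Z, t ∈ Z ∪ R, and z ranked before t in π. -/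
open Finset

variable {α : Type}

/-!
Everything is additive in the profile, so it suffices to treat a single vote `v`. If a ranking
lists `w` immediately before `a`, swapping the two changes the top element only of the sets
`{w, a, t}` with `t = a` or `t` ranked after `a`, and there the top passes from `w` to `a`; so
`d3 · v` drops by `∑ₜ topShift v w a t`. Moving `w` past a whole block `M` is a chain of such
swaps. Now `σ₁*` arises from `π` by moving `y` past `Z ++ [x]`, and `π` from `σ₂*` by moving `x`
past `y :: Z`. What remains is to recognise `δ`, `Q`, `P` and `S` of a single vote as
combinations of `topShift`, a finite check on the relative order of at most four alternatives.
-/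

def IsFirst [DecidableEq α] (l : List α) (S : Finset α) (a : α) : Prop :=
  a ∈ S ∧ ∀ c ∈ S, l.idxOf a ≤ l.idxOf c

def Disagree3 [DecidableEq α] (l m : List α) (S : Finset α) : Prop :=
  S.card ≤ 3 ∧ ∃ a b, a ≠ b ∧ IsFirst l S a ∧ IsFirst m S b

/-- The change in the agreement with `v` about the top of `{w, a, t}` when a ranking's top of
that set passes from `w` to `a`. -/
def topShift [DecidableEq α] (v : List α) (w a t : α) : ℤ :=
  (if v.idxOf a ≤ v.idxOf w ∧ v.idxOf a ≤ v.idxOf t then 1 else 0) -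
    if v.idxOf w ≤ v.idxOf a ∧ v.idxOf w ≤ v.idxOf t then 1 else 0

def sumOrderedPairs (f : α → α → ℤ) : List α → ℤ
  | [] => 0
  | a :: l => (l.map (f a)).sum + sumOrderedPairs f l

section Rankings

theorem IsRanking.perm {l l' : List α} (hl : IsRanking l) (h : l.Perm l') : IsRanking l' :=
  ⟨h.nodup_iff.1 hl.1, fun a => h.mem_iff.1 (hl.2 a)⟩

variable [DecidableEq α] {l v : List α} {S : Finset α} {a b : α}

theorem IsRanking.idxOf_inj (hl : IsRanking l) : l.idxOf a = l.idxOf b ↔ a = b :=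
  List.idxOf_inj (hl.2 a)

theorem IsRanking.idxOf_ne (hl : IsRanking l) (hab : a ≠ b) : l.idxOf a ≠ l.idxOf b :=
  fun h => hab (hl.idxOf_inj.1 h)

theorem IsFirst.unique (hl : IsRanking l) (ha : IsFirst l S a) (hb : IsFirst l S b) : a = b :=
  hl.idxOf_inj.1 (le_antisymm (ha.2 b hb.1) (hb.2 a ha.1))

theorem exists_isFirst (l : List α) (hS : S.Nonempty) : ∃ a, IsFirst l S a := by
  obtain ⟨a, ha, hmin⟩ := S.exists_min_image l.idxOf hS
  exact ⟨a, ha, hmin⟩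

theorem disagree3_iff (hl : IsRanking l) (hv : IsRanking v) (hS : S.card ≤ 3)
    (ha : IsFirst l S a) : Disagree3 l v S ↔ ¬IsFirst v S a := by
  constructor
  · rintro ⟨-, a', b, hab, ha', hb⟩ hva
    exact hab ((ha'.unique hl ha).trans (hva.unique hv hb))
  · intro hva
    obtain ⟨b, hb⟩ := exists_isFirst v ⟨a, ha.1⟩
    exact ⟨hS, a, b, fun h => hva (h ▸ hb), ha, hb⟩

open Classical in
theorem d3_sub_d3_eq_sum [Fintype α] (l l' v : List α) :
    (d3 l v : ℤ) - d3 l' v =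
      ∑ S, ((if Disagree3 l v S then 1 else 0) - if Disagree3 l' v S then 1 else 0) := by
  have h (l : List α) : (d3 l v : ℤ) = ∑ S, if Disagree3 l v S then 1 else 0 := by
    rw [d3, Finset.powerset_univ, Finset.card_filter]
    push_cast
    refine Finset.sum_congr rfl fun S _ => if_congr ?_ rfl rfl
    simp only [Disagree3, IsFirst]
    grind
  rw [h, h, Finset.sum_sub_distrib]

open Classical in
theorem disagree3_sub_disagree3_triple {l l' : List α} {w t : α} (hl : IsRanking l)
    (hl' : IsRanking l') (hv : IsRanking v) (hw : IsFirst l {w, a, t} w)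
    (ha : IsFirst l' {w, a, t} a) :
    ((if Disagree3 l v {w, a, t} then 1 else 0) - if Disagree3 l' v {w, a, t} then 1 else 0) =
      topShift v w a t := by
  have hcard : ({w, a, t} : Finset α).card ≤ 3 := Finset.card_le_three
  rw [if_congr (disagree3_iff hl hv hcard hw) rfl rfl,
    if_congr (disagree3_iff hl' hv hcard ha) rfl rfl]
  simp only [IsFirst, topShift, Finset.mem_insert, Finset.mem_singleton, true_or, or_true,
    forall_eq_or_imp, forall_eq, le_refl, true_and]
  split_ifs <;> simp_all

end Rankings

section Swap

variable [DecidableEq α] {P Q v : List α} {w a b : α}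

theorem swap_idxOf_of_mem_left (hb : b ∈ P) :
    (P ++ w :: a :: Q).idxOf b < P.length ∧
      (P ++ a :: w :: Q).idxOf b = (P ++ w :: a :: Q).idxOf b := by
  simp [List.idxOf_append_of_mem hb, List.idxOf_lt_length_iff.2 hb]

theorem swap_idxOf_self (hl : IsRanking (P ++ w :: a :: Q)) :
    (P ++ w :: a :: Q).idxOf w = P.length ∧ (P ++ a :: w :: Q).idxOf w = P.length + 1 ∧
      (P ++ w :: a :: Q).idxOf a = P.length + 1 ∧ (P ++ a :: w :: Q).idxOf a = P.length := by
  obtain ⟨-, ⟨⟨hwa, -⟩, -⟩, hP⟩ := by simpa [List.nodup_append] using hl.1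
  have hwP : w ∉ P := fun h => (hP w h).1 rfl
  have haP : a ∉ P := fun h => (hP a h).2.1 rfl
  simp [List.idxOf_append, hwP, haP, hwa, Ne.symm hwa, add_comm]

theorem swap_idxOf_of_mem_right (hl : IsRanking (P ++ w :: a :: Q)) (hb : b ∈ Q) :
    P.length + 1 < (P ++ w :: a :: Q).idxOf b ∧
      (P ++ a :: w :: Q).idxOf b = (P ++ w :: a :: Q).idxOf b := by
  obtain ⟨-, ⟨⟨-, hwQ⟩, haQ, -⟩, hP⟩ := by simpa [List.nodup_append] using hl.1
  have hbP : b ∉ P := fun h => (hP b h).2.2 b hb rfl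
  have hbw : w ≠ b := by rintro rfl; exact hwQ hb
  have hba : a ≠ b := by rintro rfl; exact haQ hb
  simp only [List.idxOf_append_of_notMem hbP, List.idxOf_cons_ne _ hbw,
    List.idxOf_cons_ne _ hba, and_true]
  omega

theorem swap_idxOf_cases (hl : IsRanking (P ++ w :: a :: Q)) (b : α) :
    (P ++ w :: a :: Q).idxOf b < P.length ∧
        (P ++ a :: w :: Q).idxOf b = (P ++ w :: a :: Q).idxOf b ∨
      b = w ∨ b = a ∨
      b ∈ Q ∧ P.length + 1 < (P ++ w :: a :: Q).idxOf b ∧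
        (P ++ a :: w :: Q).idxOf b = (P ++ w :: a :: Q).idxOf b := by
  rcases (by simpa using hl.2 b : b ∈ P ∨ b = w ∨ b = a ∨ b ∈ Q) with hb | hb | hb | hb
  exacts [.inl (swap_idxOf_of_mem_left hb), .inr (.inl hb), .inr (.inr (.inl hb)),
    .inr (.inr (.inr ⟨hb, swap_idxOf_of_mem_right hl hb⟩))]

theorem IsFirst.swap {S : Finset α} {c : α} (hl : IsRanking (P ++ w :: a :: Q))
    (hc : IsFirst (P ++ w :: a :: Q) S c) (hS : ¬(c = w ∧ a ∈ S)) :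
    IsFirst (P ++ a :: w :: Q) S c := by
  refine ⟨hc.1, fun d hdS => ?_⟩
  have hcd := hc.2 d hdS
  have hwa := swap_idxOf_self hl
  rcases swap_idxOf_cases hl c with hc | rfl | rfl | ⟨-, hc⟩ <;>
  rcases swap_idxOf_cases hl d with hd | rfl | rfl | ⟨-, hd⟩ <;>
  first | omega | exact absurd ⟨rfl, hdS⟩ hS

theorem isFirst_swap_triple {t : α} (hl : IsRanking (P ++ w :: a :: Q)) (ht : t ∈ a :: Q) :
    IsFirst (P ++ w :: a :: Q) {w, a, t} w ∧ IsFirst (P ++ a :: w :: Q) {w, a, t} a := by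
  have hwa := swap_idxOf_self hl
  have ht : t = a ∨ P.length + 1 < (P ++ w :: a :: Q).idxOf t ∧
      (P ++ a :: w :: Q).idxOf t = (P ++ w :: a :: Q).idxOf t := by
    rcases List.mem_cons.1 ht with rfl | ht
    exacts [.inl rfl, .inr (swap_idxOf_of_mem_right hl ht)]
  refine ⟨⟨by simp, ?_⟩, ⟨by simp, ?_⟩⟩ <;>
    simp only [Finset.mem_insert, Finset.mem_singleton, forall_eq_or_imp, forall_eq] <;>
    rcases ht with rfl | ht <;> omega

theorem exists_triple_eq_of_isFirst_swap {S : Finset α} (hl : IsRanking (P ++ w :: a :: Q))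
    (hS : S.card ≤ 3) (hw : IsFirst (P ++ w :: a :: Q) S w) (haS : a ∈ S) :
    ∃ t ∈ a :: Q, {w, a, t} = S := by
  have hwa := swap_idxOf_self hl
  have haw : a ≠ w := by rintro rfl; omega
  have haS' : a ∈ S.erase w := Finset.mem_erase.2 ⟨haw, haS⟩
  have hS' : S = insert w (insert a ((S.erase w).erase a)) := by
    rw [Finset.insert_erase haS', Finset.insert_erase hw.1]
  have hU : ((S.erase w).erase a).card ≤ 1 := by
    rw [Finset.card_erase_of_mem haS', Finset.card_erase_of_mem hw.1]
    omega
  rcases ((S.erase w).erase a).eq_empty_or_nonempty with hU0 | hU0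
  · exact ⟨a, List.mem_cons_self, by rw [hS', hU0]; simp⟩
  obtain ⟨t, ht⟩ := Finset.card_eq_one.1 (le_antisymm hU (Finset.card_pos.2 hU0))
  have htU : t ∈ (S.erase w).erase a := by simp [ht]
  simp only [Finset.mem_erase] at htU
  refine ⟨t, ?_, by rw [hS', ht]⟩
  have hwt := hw.2 t htU.2.2
  rcases swap_idxOf_cases hl t with h | h | h | ⟨htQ, -⟩
  · omega
  · exact absurd h htU.2.1
  · exact absurd h htU.1
  · exact List.mem_cons_of_mem a htQ

theorem swap_triple_injOn (hl : IsRanking (P ++ w :: a :: Q)) :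
    Set.InjOn (fun t => ({w, a, t} : Finset α)) (a :: Q).toFinset := by
  intro t ht t' ht' (h : ({w, a, t} : Finset α) = {w, a, t'})
  have hw : w ∉ a :: Q := (List.nodup_cons.1 (List.nodup_append.1 hl.1).2.1).1
  have hwt : t ≠ w := fun h => hw (h ▸ List.mem_toFinset.1 ht)
  have hwt' : t' ≠ w := fun h => hw (h ▸ List.mem_toFinset.1 ht')
  have h1 : t ∈ ({w, a, t'} : Finset α) := h ▸ by simp
  have h2 : t' ∈ ({w, a, t} : Finset α) := h.symm ▸ by simp
  simp only [Finset.mem_insert, Finset.mem_singleton, hwt, hwt', false_or] at h1 h2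
  rcases h1 with rfl | h1
  · rcases h2 with rfl | rfl <;> rfl
  · exact h1

open Classical in
theorem d3_sub_d3_swap [Fintype α] (hl : IsRanking (P ++ w :: a :: Q)) (hv : IsRanking v) :
    (d3 (P ++ w :: a :: Q) v : ℤ) - d3 (P ++ a :: w :: Q) v =
      ((a :: Q).map (topShift v w a)).sum := by
  have hl' : IsRanking (P ++ a :: w :: Q) := hl.perm ((List.Perm.swap a w Q).append_left P)
  have hvanish (S : Finset α) (hS : S ∉ (a :: Q).toFinset.image fun t => {w, a, t}) :
      ((if Disagree3 (P ++ w :: a :: Q) v S then 1 else 0) -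
        if Disagree3 (P ++ a :: w :: Q) v S then 1 else 0 : ℤ) = 0 := by
    by_cases hS3 : S.card ≤ 3
    · rcases S.eq_empty_or_nonempty with rfl | hne
      · simp [Disagree3, IsFirst]
      obtain ⟨c, hc⟩ := exists_isFirst (P ++ w :: a :: Q) hne
      have hc' : ¬(c = w ∧ a ∈ S) := by
        rintro ⟨rfl, haS⟩
        obtain ⟨t, ht, rfl⟩ := exists_triple_eq_of_isFirst_swap hl hS3 hc haS
        exact hS (Finset.mem_image.2 ⟨t, List.mem_toFinset.2 ht, rfl⟩)
      rw [if_congr (disagree3_iff hl hv hS3 hc) rfl rfl,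
        if_congr (disagree3_iff hl' hv hS3 (hc.swap hl hc')) rfl rfl, sub_self]
    · simp [Disagree3, hS3]
  rw [d3_sub_d3_eq_sum, ← Finset.sum_subset (Finset.subset_univ _) fun S _ hS => hvanish S hS,
    Finset.sum_image (swap_triple_injOn hl),
    ← List.sum_toFinset _ (List.nodup_append.1 hl.1).2.1.of_cons]
  refine Finset.sum_congr rfl fun t ht => ?_
  have h := isFirst_swap_triple hl (List.mem_toFinset.1 ht)
  exact disagree3_sub_disagree3_triple hl hl' hv h.1 h.2

theorem d3_sub_d3_moveAfter [Fintype α] {M : List α} (hl : IsRanking (P ++ w :: (M ++ Q)))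
    (hv : IsRanking v) :
    (d3 (P ++ w :: (M ++ Q)) v : ℤ) - d3 (P ++ (M ++ w :: Q)) v =
      (M.map fun a => topShift v w a a).sum + sumOrderedPairs (topShift v w) M +
        (M.map fun a => (Q.map (topShift v w a)).sum).sum := by
  induction M generalizing P with
  | nil => simp [sumOrderedPairs]
  | cons a M ih =>
    have hswap := d3_sub_d3_swap (Q := M ++ Q) hl hv
    have hmove := ih (P := P ++ [a])
      (by simpa using hl.perm ((List.Perm.swap a w _).append_left P))
    simp only [List.append_assoc, List.cons_append, List.nil_append] at hmove
    simp only [List.cons_append, List.map_cons, List.sum_cons, sumOrderedPairs, List.map_append,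
      List.sum_append] at hswap ⊢
    linarith

end Swap

section OrderedPairs

theorem sumOrderedPairs_append_singleton (f : α → α → ℤ) (l : List α) (b : α) :
    sumOrderedPairs f (l ++ [b]) = sumOrderedPairs f l + (l.map (f · b)).sum := by
  induction l with
  | nil => simp [sumOrderedPairs]
  | cons a l ih =>
    simp only [List.cons_append, sumOrderedPairs, ih, List.map_append, List.sum_append,
      List.map_cons, List.map_nil, List.sum_cons, List.sum_nil]
    ring

theorem sumOrderedPairs_sub (f g : α → α → ℤ) (l : List α) :
    sumOrderedPairs (fun a b => f a b - g a b) l = sumOrderedPairs f l - sumOrderedPairs g l := by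
  induction l with
  | nil => simp [sumOrderedPairs]
  | cons a l ih =>
    have h := Multiset.sum_map_sub (m := (l : Multiset α)) (f := f a) (g := g a)
    simp only [Multiset.map_coe, Multiset.sum_coe] at h
    simp only [sumOrderedPairs, ih, h]
    ring

theorem sumOrderedPairs_congr {f g : α → α → ℤ} {l : List α} (hl : l.Nodup)
    (h : ∀ a ∈ l, ∀ b ∈ l, a ≠ b → f a b = g a b) :
    sumOrderedPairs f l = sumOrderedPairs g l := by
  induction l with
  | nil => rfl
  | cons a l ih =>
    have ha := (List.nodup_cons.1 hl).1
    simp only [sumOrderedPairs]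
    rw [List.map_congr_left fun b hb => h a List.mem_cons_self b (List.mem_cons_of_mem a hb)
      fun hab => ha (hab ▸ hb), ih (List.nodup_cons.1 hl).2 fun b hb c hc =>
        h b (List.mem_cons_of_mem a hb) c (List.mem_cons_of_mem a hc)]

variable [DecidableEq α]

theorem List.idxOf_lt_idxOf_of_mem_append {X Y : List α} {a b : α} (h : (X ++ Y).Nodup)
    (ha : a ∈ X) (hb : b ∈ Y) : (X ++ Y).idxOf a < (X ++ Y).idxOf b := by
  rw [List.idxOf_append_of_mem ha,
    List.idxOf_append_of_notMem fun hbX => List.nodup_append.1 h |>.2.2 b hbX b hb rfl]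
  exact (List.idxOf_lt_length_iff.2 ha).trans_le (Nat.le_add_right _ _)

theorem sumOrderedPairs_eq_sum_ite {A K B : List α} (h : (A ++ K ++ B).Nodup)
    (f : α → α → ℤ) :
    sumOrderedPairs f K = (K.map fun a => (K.map fun b =>
      if (A ++ K ++ B).idxOf a < (A ++ K ++ B).idxOf b then f a b else 0).sum).sum := by
  induction K generalizing A with
  | nil => rfl
  | cons c K ih =>
    have hA : A ++ c :: K ++ B = A ++ [c] ++ K ++ B := by simp
    have hlt {a b : α} (ha : a ∈ A ++ [c]) (hb : b ∈ K) :
        (A ++ c :: K ++ B).idxOf a < (A ++ c :: K ++ B).idxOf b := by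
      rw [hA, List.append_assoc] at h ⊢
      exact List.idxOf_lt_idxOf_of_mem_append h ha (List.mem_append_left B hb)
    rw [sumOrderedPairs, ih (by rwa [hA] at h), ← hA]
    simp only [List.map_cons, List.sum_cons, lt_irrefl, if_false, zero_add]
    congr 1
    · exact congrArg List.sum (List.map_congr_left fun b hb => (if_pos (hlt (by simp) hb)).symm)
    · refine congrArg List.sum (List.map_congr_left fun a ha => ?_)
      rw [if_neg (not_lt.2 (hlt (by simp) ha).le), zero_add]

theorem sum_sum_ite_idxOf_eq_sumOrderedPairs {L Z R : List α} {x y : α}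
    (hπ : (L ++ y :: (Z ++ x :: R)).Nodup) (f : α → α → ℤ) :
    ∑ z ∈ Z.toFinset, ∑ t ∈ (Z ++ R).toFinset,
        (if (L ++ y :: (Z ++ x :: R)).idxOf z < (L ++ y :: (Z ++ x :: R)).idxOf t
          then f z t else 0) =
      sumOrderedPairs f Z + ∑ z ∈ Z.toFinset, ∑ t ∈ R.toFinset, f z t := by
  obtain ⟨-, ⟨-, hZ, -, hZR⟩, -⟩ := by simpa [List.nodup_append] using hπ
  have hdisj : Disjoint Z.toFinset R.toFinset := Finset.disjoint_left.2 fun a ha haR =>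
    (hZR a (List.mem_toFinset.1 ha)).2 a (List.mem_toFinset.1 haR) rfl
  rw [show L ++ y :: (Z ++ x :: R) = L ++ [y] ++ Z ++ x :: R by simp] at hπ ⊢
  have hlt {z t : α} (hz : z ∈ Z) (ht : t ∈ R) :
      (L ++ [y] ++ Z ++ x :: R).idxOf z < (L ++ [y] ++ Z ++ x :: R).idxOf t :=
    List.idxOf_lt_idxOf_of_mem_append hπ (List.mem_append_right _ hz) (List.mem_cons_of_mem x ht)
  simp only [List.toFinset_append, Finset.sum_union hdisj, Finset.sum_add_distrib]
  congr 1
  · rw [sumOrderedPairs_eq_sum_ite hπ f]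
    simp only [List.sum_toFinset _ hZ]
  · exact Finset.sum_congr rfl fun z hz => Finset.sum_congr rfl fun t ht =>
      if_pos (hlt (List.mem_toFinset.1 hz) (List.mem_toFinset.1 ht))

end OrderedPairs

section SingleVote

variable [DecidableEq α] {v : List α} {x y z t : α}

theorem topShift_swap (v : List α) (w a t : α) : topShift v a w t = -topShift v w a t := by
  simp only [topShift]
  ring

theorem topShift_self_right (v : List α) (w a : α) : topShift v w a w = topShift v w a a := by
  simp only [topShift, le_refl, and_true, and_self]

theorem d3_deltas_eq_sum_topShift [Fintype α] {L Z R : List α} (hv : IsRanking v)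
    (hπ : IsRanking (L ++ y :: (Z ++ x :: R))) :
    ((d3 (L ++ y :: (Z ++ x :: R)) v : ℤ) - d3 (L ++ (Z ++ x :: y :: R)) v)
      + ((d3 (L ++ y :: (Z ++ x :: R)) v : ℤ) - d3 (L ++ x :: y :: (Z ++ R)) v) =
    2 * ∑ t ∈ R.toFinset, topShift v y x t + 2 * topShift v y x x
      + ∑ z ∈ Z.toFinset,
          (topShift v y z z + topShift v y z x + topShift v y x z - topShift v x z z)
      - (sumOrderedPairs (fun z t => topShift v x z t - topShift v y z t) Z
          + ∑ z ∈ Z.toFinset, ∑ t ∈ R.toFinset, (topShift v x z t - topShift v y z t)) := by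
  obtain ⟨-, ⟨-, hZ, ⟨-, hR⟩, -⟩, -⟩ := by simpa [List.nodup_append] using hπ.1
  have hσ₁ := d3_sub_d3_moveAfter (P := L) (w := y) (M := Z ++ [x]) (Q := R)
    (by simpa using hπ) hv
  have hσ₂ := d3_sub_d3_moveAfter (P := L) (w := x) (M := y :: Z) (Q := R)
    (hπ.perm (((List.perm_middle.cons y).trans (List.Perm.swap x y _)).append_left L)) hv
  simp only [List.map_append, List.sum_append, sumOrderedPairs_append_singleton, List.map_cons,
    List.map_nil, List.sum_cons, List.sum_nil, add_zero, List.append_assoc, List.cons_append,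
    List.nil_append, sumOrderedPairs] at hσ₁ hσ₂
  simp only [← List.sum_toFinset _ hZ, ← List.sum_toFinset _ hR] at hσ₁ hσ₂
  simp only [sumOrderedPairs_sub, Finset.sum_add_distrib, Finset.sum_sub_distrib,
    topShift_swap v y x, Finset.sum_neg_distrib, topShift_self_right] at hσ₁ hσ₂ ⊢
  linarith

theorem Multiset.countP_singleton {β : Type*} (p : β → Prop) [DecidablePred p] (a : β) :
    Multiset.countP p {a} = if p a then 1 else 0 := by
  rw [← Multiset.cons_zero, Multiset.countP_cons, Multiset.countP_zero, zero_add]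

theorem del_singleton (hv : IsRanking v) (hxy : x ≠ y) : del {v} x y = topShift v y x x := by
  have h1 := hv.idxOf_ne hxy
  simp only [del, nn2, topShift, Multiset.countP_singleton, Nat.cast_ite, Nat.cast_one,
    Nat.cast_zero, le_refl, and_true]
  rcases h1.lt_or_gt with h1 | h1 <;> simp (disch := omega) only [if_pos, if_neg]

theorem Qq_singleton (hv : IsRanking v) (hxy : x ≠ y) (hxt : x ≠ t) (hyt : y ≠ t) :
    Qq {v} x y t = topShift v y x t := by
  have h1 := hv.idxOf_ne hxy
  have h2 := hv.idxOf_ne hxt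
  have h3 := hv.idxOf_ne hyt
  simp only [Qq, nn3, topShift, Multiset.countP_singleton, Nat.cast_ite, Nat.cast_one,
    Nat.cast_zero]
  rcases h1.lt_or_gt with h1 | h1 <;> rcases h2.lt_or_gt with h2 | h2 <;>
  rcases h3.lt_or_gt with h3 | h3 <;>
  first | (exfalso; omega) | (simp (disch := omega) only [if_pos, if_neg]; norm_num)

theorem Pq_singleton (hv : IsRanking v) (hxy : x ≠ y) (hxz : x ≠ z) (hyz : y ≠ z) :
    Pq {v} x y z =
      topShift v y z z + topShift v y z x + topShift v y x z - topShift v x z z := by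
  have h1 := hv.idxOf_ne hxy
  have h2 := hv.idxOf_ne hxz
  have h3 := hv.idxOf_ne hyz
  simp only [Pq, nn3, topShift, Multiset.countP_singleton, Nat.cast_ite, Nat.cast_one,
    Nat.cast_zero, le_refl, and_true]
  rcases h1.lt_or_gt with h1 | h1 <;> rcases h2.lt_or_gt with h2 | h2 <;>
  rcases h3.lt_or_gt with h3 | h3 <;>
  first | (exfalso; omega) | (simp (disch := omega) only [if_pos, if_neg]; norm_num)

theorem Ss_singleton (hv : IsRanking v) (hxy : x ≠ y) (hxz : x ≠ z) (hxt : x ≠ t)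
    (hyz : y ≠ z) (hyt : y ≠ t) (hzt : z ≠ t) :
    Ss {v} y x z t = topShift v x z t - topShift v y z t := by
  have h1 := hv.idxOf_ne hxy
  have h2 := hv.idxOf_ne hxz
  have h3 := hv.idxOf_ne hxt
  have h4 := hv.idxOf_ne hyz
  have h5 := hv.idxOf_ne hyt
  have h6 := hv.idxOf_ne hzt
  simp only [Ss, Rr, nn4, topShift, Multiset.countP_singleton, Nat.cast_ite, Nat.cast_one,
    Nat.cast_zero]
  rcases h1.lt_or_gt with h1 | h1 <;> rcases h2.lt_or_gt with h2 | h2 <;>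
  rcases h3.lt_or_gt with h3 | h3 <;> rcases h4.lt_or_gt with h4 | h4 <;>
  rcases h5.lt_or_gt with h5 | h5 <;> rcases h6.lt_or_gt with h6 | h6 <;>
  first | (exfalso; omega) | (simp (disch := omega) only [if_pos, if_neg]; norm_num)

theorem d3_deltas_singleton [Fintype α] {L Z R : List α}
    (hv : IsRanking v) (hπ : IsRanking (L ++ y :: (Z ++ x :: R))) :
    ((d3 (L ++ y :: (Z ++ x :: R)) v : ℤ) - d3 (L ++ (Z ++ x :: y :: R)) v)
      + ((d3 (L ++ y :: (Z ++ x :: R)) v : ℤ) - d3 (L ++ x :: y :: (Z ++ R)) v)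
    = 2 * ∑ t ∈ R.toFinset, Qq {v} x y t + 2 * del {v} x y
      + ∑ z ∈ Z.toFinset, Pq {v} x y z
      - ∑ z ∈ Z.toFinset, ∑ t ∈ (Z ++ R).toFinset,
          (if (L ++ y :: (Z ++ x :: R)).idxOf z < (L ++ y :: (Z ++ x :: R)).idxOf t
            then Ss {v} y x z t else 0) := by
  obtain ⟨-, ⟨⟨hyZ, hyx, hyR⟩, hZ, ⟨hxR, -⟩, hZxR⟩, -⟩ := by
    simpa [List.nodup_append] using hπ.1
  have hxy : x ≠ y := Ne.symm hyx
  have hxz (z : α) (hz : z ∈ Z.toFinset) : x ≠ z := Ne.symm (hZxR z (List.mem_toFinset.1 hz)).1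
  have hyz (z : α) (hz : z ∈ Z.toFinset) : y ≠ z := fun h => hyZ (h ▸ List.mem_toFinset.1 hz)
  have hxt (t : α) (ht : t ∈ R.toFinset) : x ≠ t := fun h => hxR (h ▸ List.mem_toFinset.1 ht)
  have hyt (t : α) (ht : t ∈ R.toFinset) : y ≠ t := fun h => hyR (h ▸ List.mem_toFinset.1 ht)
  have hzt (z : α) (hz : z ∈ Z.toFinset) (t : α) (ht : t ∈ R.toFinset) : z ≠ t :=
    (hZxR z (List.mem_toFinset.1 hz)).2 t (List.mem_toFinset.1 ht)
  rw [d3_deltas_eq_sum_topShift hv hπ, sum_sum_ite_idxOf_eq_sumOrderedPairs hπ.1,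
    del_singleton hv hxy,
    Finset.sum_congr rfl fun t ht => Qq_singleton hv hxy (hxt t ht) (hyt t ht),
    Finset.sum_congr rfl fun z hz => Pq_singleton hv hxy (hxz z hz) (hyz z hz),
    Finset.sum_congr rfl fun z hz => Finset.sum_congr rfl fun t ht =>
      Ss_singleton hv hxy (hxz z hz) (hxt t ht) (hyz z hz) (hyt t ht) (hzt z hz t ht),
    sumOrderedPairs_congr hZ fun z hz t ht =>
      Ss_singleton hv hxy (hxz z (List.mem_toFinset.2 hz)) (hxz t (List.mem_toFinset.2 ht))
        (hyz z (List.mem_toFinset.2 hz)) (hyz t (List.mem_toFinset.2 ht))]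

end SingleVote

section Additivity

variable [DecidableEq α] (v : List α) (V : Multiset (List α))

theorem d3V_cons [Fintype α] (l : List α) : d3V l (v ::ₘ V) = d3 l v + d3V l V := by
  simp [d3V]

theorem nn2_cons (x y : α) : nn2 (v ::ₘ V) x y = nn2 {v} x y + nn2 V x y := by
  rw [← Multiset.singleton_add, nn2, nn2, nn2, Multiset.countP_add]

theorem nn3_cons (x y z : α) : nn3 (v ::ₘ V) x y z = nn3 {v} x y z + nn3 V x y z := by
  rw [← Multiset.singleton_add, nn3, nn3, nn3, Multiset.countP_add]

theorem nn4_cons (x y z t : α) :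
    nn4 (v ::ₘ V) x y z t = nn4 {v} x y z t + nn4 V x y z t := by
  rw [← Multiset.singleton_add, nn4, nn4, nn4, Multiset.countP_add]

theorem del_cons (x y : α) : del (v ::ₘ V) x y = del {v} x y + del V x y := by
  simp only [del, nn2_cons]; push_cast; ring

theorem Qq_cons (x y z : α) : Qq (v ::ₘ V) x y z = Qq {v} x y z + Qq V x y z := by
  simp only [Qq, nn3_cons]; push_cast; ring

theorem Pq_cons (x y z : α) : Pq (v ::ₘ V) x y z = Pq {v} x y z + Pq V x y z := by
  simp only [Pq, nn3_cons]; push_cast; ring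

theorem Ss_cons (y x z t : α) : Ss (v ::ₘ V) y x z t = Ss {v} y x z t + Ss V y x z t := by
  simp only [Ss, Rr, nn4_cons]; push_cast; ring

end Additivity

theorem stmt11_general [Fintype α] [DecidableEq α]
    (V : Multiset (List α)) (hV : ∀ v ∈ V, IsRanking v)
    (x y : α)
    (L Z R : List α)
    (hπ : IsRanking (L ++ y :: (Z ++ x :: R))) :
    ((d3V (L ++ y :: (Z ++ x :: R)) V : ℤ) - d3V (L ++ (Z ++ x :: y :: R)) V)
      + ((d3V (L ++ y :: (Z ++ x :: R)) V : ℤ) - d3V (L ++ x :: y :: (Z ++ R)) V)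
    = 2 * ∑ t ∈ R.toFinset, Qq V x y t + 2 * del V x y
      + ∑ z ∈ Z.toFinset, Pq V x y z
      - ∑ z ∈ Z.toFinset, ∑ t ∈ (Z ++ R).toFinset,
          (if (L ++ y :: (Z ++ x :: R)).idxOf z < (L ++ y :: (Z ++ x :: R)).idxOf t
            then Ss V y x z t else 0) := by
  induction V using Multiset.induction_on with
  | empty => simp [d3V, Qq, del, Pq, Ss, Rr, nn2, nn3, nn4]
  | cons v V ih =>
    have hv := d3_deltas_singleton (hV v (Multiset.mem_cons_self v V)) hπ
    specialize ih fun w hw => hV w (Multiset.mem_cons_of_mem hw)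
    simp only [d3V_cons, del_cons, Qq_cons, Pq_cons, Ss_cons, ite_add_zero,
      Finset.sum_add_distrib] at ih ⊢
    push_cast
    linarith

theorem stmt11 [Fintype α] [DecidableEq α]
    (V : Multiset (List α)) (hV : ∀ v ∈ V, IsRanking v)
    (x y : α) (hxy : x ≠ y)
    (L Z R : List α)
    (hπ : IsRanking (L ++ y :: (Z ++ x :: R))) :
    ((d3V (L ++ y :: (Z ++ x :: R)) V : ℤ) - d3V (L ++ (Z ++ x :: y :: R)) V)
      + ((d3V (L ++ y :: (Z ++ x :: R)) V : ℤ) - d3V (L ++ x :: y :: (Z ++ R)) V)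
    = 2 * ∑ t ∈ R.toFinset, Qq V x y t + 2 * del V x y
      + ∑ z ∈ Z.toFinset, Pq V x y z
      - ∑ z ∈ Z.toFinset, ∑ t ∈ (Z ++ R).toFinset,
          (if (L ++ y :: (Z ++ x :: R)).idxOf z < (L ++ y :: (Z ++ x :: R)).idxOf t
            then Ss V y x z t else 0) :=
  stmt11_general V hV x y L Z R hπ
end

section
/- Let V be an election over a finite set C of alternatives, let x, y ∈ C be distinct, and let L, Z, R be pairwise disjoint linearly ordered subsets of C with C = L ∪ {y} ∪ Z ∪ {x} ∪ R. Consider the rankings π: L > y > Z > x > R, σ₁*: L > Z > x > y > R, and σ₂*: L > x > y > Z > R, and set Δᵢ = d²(π, V) − d²(σᵢ*, V) for i ∈ {1,2}. Then Δ₁ + Δ₂ = 2δ_{xy} − Σ_{z ∈ Z} (δ_{yz} + δ_{zx}). -/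
open Finset

variable {α : Type}

/-!
Moving an alternative `u` rightwards past a block `B` changes the relative order of exactly
the pairs `{u, b}` with `b ∈ B`, so `d²(A u B C, V) − d²(A B u C, V) = Σ_{b ∈ B} δ_{bu}`; by
induction on `B` this reduces to swapping two adjacent alternatives. Now `σ₁*` is `π` with `y`
moved past `Z x`, and `π` is `σ₂*` with `x` moved past `y Z`; adding the two instances and using
`δ_{ab} = −δ_{ba}` gives the formula.
-/

lemma del_swap [DecidableEq α] (V : Multiset (List α)) (a b : α) : del V a b = -del V b a := by
  simp only [del, neg_sub]

lemma del_add [DecidableEq α] (V W : Multiset (List α)) (a b : α) :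
    del (V + W) a b = del V a b + del W a b := by
  simp only [del, nn2, Multiset.countP_add]
  push_cast
  ring

lemma del_singleton_s16 [DecidableEq α] (v : List α) (a b : α) :
    del {v} a b = (if v.idxOf a < v.idxOf b then 1 else 0) -
      (if v.idxOf b < v.idxOf a then 1 else 0) := by
  simp only [del, nn2, ← Multiset.cons_zero, Multiset.countP_cons, Multiset.countP_zero]
  push_cast
  ring

section Kendall

variable [Fintype α] [DecidableEq α]

lemma d2_eq_card_inversions (l m : List α) :
    d2 l m = (univ.filter
      (fun p : α × α => l.idxOf p.1 < l.idxOf p.2 ∧ m.idxOf p.2 < m.idxOf p.1)).card := by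
  symm
  apply card_bij (fun p _ => ({p.1, p.2} : Finset α))
  · rintro ⟨a, b⟩ hp
    simp only [mem_filter, mem_univ, true_and] at hp
    have hab : a ≠ b := by rintro rfl; exact lt_irrefl _ hp.1
    exact mem_filter.mpr ⟨mem_powerset.mpr (subset_univ _), card_pair hab,
      a, by simp, b, by simp, hp⟩
  · rintro ⟨a, b⟩ hp ⟨c, d⟩ hq heq
    simp only [mem_filter, mem_univ, true_and] at hp hq
    have hc : c ∈ ({a, b} : Finset α) := heq ▸ by simp
    have hd : d ∈ ({a, b} : Finset α) := heq ▸ by simp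
    simp only [mem_insert, mem_singleton] at hc hd
    rcases hc with rfl | rfl <;> rcases hd with rfl | rfl <;> first | rfl | omega
  · intro S hS
    obtain ⟨-, hcard, a, ha, b, hb, hl, hm⟩ := mem_filter.mp hS
    have hab : a ≠ b := by rintro rfl; exact lt_irrefl _ hl
    refine ⟨(a, b), by simpa using ⟨hl, hm⟩, ?_⟩
    exact eq_of_subset_of_card_le (by simp [insert_subset_iff, ha, hb])
      (by rw [hcard, card_pair hab])

lemma d2_eq_sum (l m : List α) :
    (d2 l m : ℤ) = ∑ p : α × α,
      if l.idxOf p.1 < l.idxOf p.2 ∧ m.idxOf p.2 < m.idxOf p.1 then 1 else 0 := by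
  rw [d2_eq_card_inversions, card_filter]
  push_cast
  rfl

end Kendall

section Positions

variable [DecidableEq α]

lemma idxOf_append_cons_cons_swap {A C : List α} {u w : α} (h : (A ++ u :: w :: C).Nodup)
    (e : α) :
    (e ≠ u ∧ e ≠ w ∧ (A ++ w :: u :: C).idxOf e = (A ++ u :: w :: C).idxOf e ∧
        ((A ++ u :: w :: C).idxOf e < A.length ∨ A.length + 1 < (A ++ u :: w :: C).idxOf e)) ∨
      (e = u ∧ (A ++ u :: w :: C).idxOf e = A.length ∧
        (A ++ w :: u :: C).idxOf e = A.length + 1) ∨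
      (e = w ∧ (A ++ u :: w :: C).idxOf e = A.length + 1 ∧
        (A ++ w :: u :: C).idxOf e = A.length) := by
  simp only [List.nodup_append, List.nodup_cons, List.mem_cons, not_or] at h
  have huw : u ≠ w := h.2.1.1.1
  by_cases heA : e ∈ A
  · left
    refine ⟨fun heu => ?_, fun hew => ?_, ?_⟩
    · exact h.2.2 e heA u (.inl rfl) heu
    · exact h.2.2 e heA w (.inr (.inl rfl)) hew
    simp only [List.idxOf_append_of_mem heA, List.idxOf_lt_length_iff.mpr heA, true_or, and_true]
  simp only [List.idxOf_append_of_notMem heA]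
  by_cases heu : e = u
  · subst heu
    simp [List.idxOf_cons_ne _ huw.symm]
  by_cases hew : e = w
  · subst hew
    simp [List.idxOf_cons_ne _ huw]
  · left
    refine ⟨heu, hew, ?_⟩
    simp only [List.idxOf_cons_ne _ (Ne.symm heu), List.idxOf_cons_ne _ (Ne.symm hew), true_and]
    omega

lemma idxOf_lt_idxOf_swap_iff {A C : List α} {u w : α} (h : (A ++ u :: w :: C).Nodup)
    {a b : α} (hab : (a, b) ≠ (u, w)) (hba : (a, b) ≠ (w, u)) :
    (A ++ w :: u :: C).idxOf a < (A ++ w :: u :: C).idxOf b ↔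
      (A ++ u :: w :: C).idxOf a < (A ++ u :: w :: C).idxOf b := by
  rcases idxOf_append_cons_cons_swap h a with ⟨-, -, ha, ha'⟩ | ⟨rfl, ha⟩ | ⟨rfl, ha⟩ <;>
    rcases idxOf_append_cons_cons_swap h b with ⟨-, -, hb, hb'⟩ | ⟨rfl, hb⟩ | ⟨rfl, hb⟩ <;>
    simp_all <;> omega

end Positions

section Moves

variable [Fintype α] [DecidableEq α]

lemma d2_sub_d2_swap (A C : List α) (u w : α) (h : (A ++ u :: w :: C).Nodup) (v : List α) :
    (d2 (A ++ u :: w :: C) v : ℤ) - d2 (A ++ w :: u :: C) v = del {v} w u := by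
  have huw : u ≠ w := by rintro rfl; simp [List.nodup_append] at h
  obtain ⟨-, hu⟩ := ((idxOf_append_cons_cons_swap h u).resolve_left
    fun h' => h'.1 rfl).resolve_right fun h' => huw h'.1
  obtain ⟨-, hw⟩ := ((idxOf_append_cons_cons_swap h w).resolve_left
    fun h' => h'.2.1 rfl).resolve_left fun h' => huw h'.1.symm
  rw [d2_eq_sum, d2_eq_sum, ← sum_sub_distrib,
    Fintype.sum_eq_add (u, w) (w, u) fun h' => huw (Prod.ext_iff.mp h').1]
  · simp [hu, hw, del_singleton_s16, sub_eq_add_neg]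
  · rintro ⟨a, b⟩ ⟨hab, hba⟩
    simp only [idxOf_lt_idxOf_swap_iff h hab hba, sub_self]

lemma d2_sub_d2_move (A B C : List α) (u : α) (h : (A ++ u :: (B ++ C)).Nodup) (v : List α) :
    (d2 (A ++ u :: (B ++ C)) v : ℤ) - d2 (A ++ (B ++ u :: C)) v =
      (B.map fun b => del {v} b u).sum := by
  induction B generalizing A with
  | nil => simp
  | cons w B ih =>
    have hswap : (A ++ w :: u :: (B ++ C)).Nodup :=
      (((List.Perm.swap w u _).append_left A).nodup_iff).mp h
    have hrest := ih (A ++ [w]) (by simpa using hswap)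
    simp only [List.append_assoc, List.cons_append, List.nil_append] at hrest ⊢
    rw [List.map_cons, List.sum_cons, ← hrest, ← d2_sub_d2_swap A (B ++ C) u w h v]
    ring

lemma d2V_sub_d2V_move (V : Multiset (List α)) (A B C : List α) (u : α)
    (h : (A ++ u :: (B ++ C)).Nodup) :
    (d2V (A ++ u :: (B ++ C)) V : ℤ) - d2V (A ++ (B ++ u :: C)) V =
      (B.map fun b => del V b u).sum := by
  induction V using Multiset.induction with
  | empty => simp [d2V, del, nn2]
  | cons v V ih =>
    simp only [← Multiset.singleton_add, del_add, List.sum_map_add, ← ih,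
      ← d2_sub_d2_move A B C u h v, d2V, Multiset.map_add, Multiset.sum_add,
      Multiset.map_singleton, Multiset.sum_singleton, Nat.cast_add]
    ring

end Moves

theorem stmt16_general [Fintype α] [DecidableEq α]
    (V : Multiset (List α))
    (x y : α)
    (L Z R : List α)
    (hπ : IsRanking (L ++ y :: (Z ++ x :: R))) :
    ((d2V (L ++ y :: (Z ++ x :: R)) V : ℤ) - d2V (L ++ (Z ++ x :: y :: R)) V)
      + ((d2V (L ++ y :: (Z ++ x :: R)) V : ℤ) - d2V (L ++ x :: y :: (Z ++ R)) V)
    = 2 * del V x y - ∑ z ∈ Z.toFinset, (del V y z + del V z x) := by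
  have hZ : Z.Nodup :=
    hπ.1.sublist (((List.sublist_append_left Z _).cons y).trans (List.sublist_append_right L _))
  have hσ₂_nodup : (L ++ x :: (y :: Z ++ R)).Nodup := by
    refine (List.Perm.nodup_iff ?_).mp hπ.1
    exact (List.perm_middle.cons y).trans (List.Perm.swap x y _) |>.append_left L
  have hπσ₁ := d2V_sub_d2V_move V L (Z ++ [x]) R y (by simpa using hπ.1)
  have hσ₂π := d2V_sub_d2V_move V L (y :: Z) R x hσ₂_nodup
  simp only [List.append_assoc, List.cons_append, List.nil_append, List.map_append,
    List.map_cons, List.map_nil, List.sum_append, List.sum_cons, List.sum_nil, add_zero]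
    at hπσ₁ hσ₂π
  rw [← List.sum_toFinset _ hZ] at hπσ₁ hσ₂π
  have hneg : ∑ z ∈ Z.toFinset, del V z y = -∑ z ∈ Z.toFinset, del V y z := by
    rw [← sum_neg_distrib]
    exact sum_congr rfl fun z _ => del_swap V z y
  rw [del_swap V y x] at hσ₂π
  rw [sum_add_distrib]
  linarith

theorem stmt16 [Fintype α] [DecidableEq α]
    (V : Multiset (List α)) (hV : ∀ v ∈ V, IsRanking v)
    (x y : α) (hxy : x ≠ y)
    (L Z R : List α)
    (hπ : IsRanking (L ++ y :: (Z ++ x :: R))) :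
    ((d2V (L ++ y :: (Z ++ x :: R)) V : ℤ) - d2V (L ++ (Z ++ x :: y :: R)) V)
      + ((d2V (L ++ y :: (Z ++ x :: R)) V : ℤ) - d2V (L ++ x :: y :: (Z ++ R)) V)
    = 2 * del V x y - ∑ z ∈ Z.toFinset, (del V y z + del V z x) :=
  stmt16_general V x y L Z R hπ
end
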